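/- Let δ > 0, C > 0, let σ be a real m×n matrix with σσᵀ ≥ δ·I_m and |σ| ≤ C, μ ∈ ℝ^m with |μ| ≤ C, and Π ⊆ ℝ^m a nonempty closed convex cone. Define, for P ∈ ℝ, Λ ∈ ℝⁿ and k > 0, F₁(v,P,Λ) := P·|σᵀv|² + 2vᵀ(Pμ+σΛ), F₁*(P,Λ) := inf_{v∈Π} F₁(v,P,Λ) and F₁^{*,k}(P,Λ) := inf_{v∈Π, |v|≤k} F₁(v,P,Λ). Let 0 < ϑ ≤ M, let (P^k) be a sequence in [ϑ,M] with P^k → P, and let Λ^k → Λ in ℝⁿ. Then lim_{k→∞} F₁^{*,k}(P^k,Λ^k) = F₁*(P,Λ). -/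

import Mathlib

/-! Since `σσᵀ ≥ δI` and `P^k ≥ ϑ > 0`, every `F₁(·, P', Λ')` with `P' ≥ ϑ` and
`|P'μ + σΛ'| ≤ B` satisfies `F₁(v) ≥ ϑδ|v|² - 2B|v|`, so it is nonnegative off the ball of
radius `R = 2B/(ϑδ)`, while `F₁(0) = 0` and `0 ∈ Π`. For `B = |Pμ + σΛ| + 1` this applies to the
limit data and, eventually, to the `k`-th data, so once `k ≥ R` both infima may be taken over
the compact set `Π ∩ B_R`. There the infimum depends continuously on `(P, Λ)`. -/

open Matrix Set Filter

/-- Euclidean norm of a vector, written via the dot product. -/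
noncomputable def vecNorm {m : ℕ} (v : Fin m → ℝ) : ℝ := Real.sqrt (v ⬝ᵥ v)

/-- `F₁(v,P,Λ) := P·|σᵀv|² + 2vᵀ(Pμ+σΛ)`. -/
noncomputable def F1 {m n : ℕ} (σ : Matrix (Fin m) (Fin n) ℝ) (μ : Fin m → ℝ)
    (Λ : Fin n → ℝ) (P : ℝ) (v : Fin m → ℝ) : ℝ :=
  P * ((σᵀ *ᵥ v) ⬝ᵥ (σᵀ *ᵥ v)) + 2 * (v ⬝ᵥ (P • μ + σ *ᵥ Λ))

lemma vecNorm_eq_norm {m : ℕ} (v : Fin m → ℝ) :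
    vecNorm v = ‖(WithLp.toLp 2 v : EuclideanSpace ℝ (Fin m))‖ := by
  rw [EuclideanSpace.norm_eq]
  simp [vecNorm, dotProduct, sq]

lemma abs_dotProduct_le_vecNorm_mul {m : ℕ} (v w : Fin m → ℝ) :
    |v ⬝ᵥ w| ≤ vecNorm v * vecNorm w := by
  simpa [vecNorm_eq_norm, EuclideanSpace.inner_toLp_toLp, dotProduct_comm] using
    abs_real_inner_le_norm (WithLp.toLp 2 v : EuclideanSpace ℝ (Fin m)) (WithLp.toLp 2 w)

lemma vecNorm_sq {m : ℕ} (v : Fin m → ℝ) : vecNorm v ^ 2 = v ⬝ᵥ v := by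
  rw [vecNorm_eq_norm, EuclideanSpace.real_norm_sq_eq]
  simp [dotProduct, sq]

lemma continuous_vecNorm {m : ℕ} : Continuous (vecNorm : (Fin m → ℝ) → ℝ) := by
  unfold vecNorm; fun_prop

lemma isCompact_setOf_vecNorm_le {m : ℕ} (R : ℝ) :
    IsCompact {v : Fin m → ℝ | vecNorm v ≤ R} := by
  have h := (PiLp.homeomorph 2 fun _ : Fin m => ℝ).symm.isCompact_preimage.2
    (isCompact_closedBall (0 : EuclideanSpace ℝ (Fin m)) R)
  convert h using 1
  ext v; simp [vecNorm_eq_norm]; rfl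

lemma continuous_F1 {m n : ℕ} (σ : Matrix (Fin m) (Fin n) ℝ) (μ : Fin m → ℝ) :
    Continuous fun x : (ℝ × (Fin n → ℝ)) × (Fin m → ℝ) => F1 σ μ x.1.2 x.1.1 x.2 := by
  unfold F1; fun_prop

lemma smul_dotProduct_self_le_of_posSemidef {ι : Type*} [Fintype ι] [DecidableEq ι]
    {A : Matrix ι ι ℝ} {δ : ℝ} (hA : (A - δ • (1 : Matrix ι ι ℝ)).PosSemidef) (v : ι → ℝ) :
    δ * (v ⬝ᵥ v) ≤ v ⬝ᵥ (A *ᵥ v) := by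
  have h := hA.dotProduct_mulVec_nonneg v
  simp only [star_trivial, sub_mulVec, smul_mulVec, one_mulVec, dotProduct_sub,
    dotProduct_smul, smul_eq_mul] at h
  linarith

lemma sInf_image_eq_sInf_image_inter {α : Type*} {F : α → ℝ} {S T : Set α} {x₀ : α}
    (hx₀ : x₀ ∈ S ∩ T) (hFx₀ : F x₀ ≤ 0) (hoff : ∀ v ∈ S, v ∉ T → 0 ≤ F v)
    (hbdd : BddBelow (F '' (S ∩ T))) :
    sInf (F '' S) = sInf (F '' (S ∩ T)) := by
  have hle : sInf (F '' (S ∩ T)) ≤ 0 := (csInf_le hbdd (mem_image_of_mem F hx₀)).trans hFx₀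
  have hlower : ∀ v ∈ S, sInf (F '' (S ∩ T)) ≤ F v := fun v hv => by
    by_cases hvT : v ∈ T
    · exact csInf_le hbdd (mem_image_of_mem F ⟨hv, hvT⟩)
    · exact hle.trans (hoff v hv hvT)
  apply le_antisymm
  · exact csInf_le_csInf ⟨_, forall_mem_image.2 hlower⟩ ⟨_, mem_image_of_mem F hx₀⟩
      (image_mono inter_subset_left)
  · exact le_csInf ((nonempty_of_mem hx₀.1).image F) (forall_mem_image.2 hlower)

section

variable {m n : ℕ} {σ : Matrix (Fin m) (Fin n) ℝ} {μ : Fin m → ℝ} {Λ : Fin n → ℝ} {P : ℝ}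

lemma F1_nonneg_of_le_vecNorm {δ ϑ B : ℝ} (hδ : 0 < δ) (hϑ : 0 < ϑ)
    (hσ : (σ * σᵀ - δ • (1 : Matrix (Fin m) (Fin m) ℝ)).PosSemidef) (hP : ϑ ≤ P)
    (hw : vecNorm (P • μ + σ *ᵥ Λ) ≤ B) {v : Fin m → ℝ} (hv : 2 * B / (ϑ * δ) ≤ vecNorm v) :
    0 ≤ F1 σ μ Λ P v := by
  have hquad : δ * vecNorm v ^ 2 ≤ (σᵀ *ᵥ v) ⬝ᵥ (σᵀ *ᵥ v) := by
    rw [vecNorm_sq, dotProduct_mulVec, vecMul_transpose, mulVec_mulVec]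
    exact (smul_dotProduct_self_le_of_posSemidef hσ v).trans_eq (dotProduct_comm _ _)
  have hlin : |v ⬝ᵥ (P • μ + σ *ᵥ Λ)| ≤ vecNorm v * B :=
    (abs_dotProduct_le_vecNorm_mul _ _).trans
      (mul_le_mul_of_nonneg_left hw (Real.sqrt_nonneg _))
  have hR : 2 * B ≤ ϑ * δ * vecNorm v := by rwa [div_le_iff₀' (by positivity)] at hv
  have hv0 : 0 ≤ vecNorm v := Real.sqrt_nonneg _
  unfold F1
  nlinarith [abs_le.1 hlin, mul_le_mul_of_nonneg_left hquad hϑ.le, mul_nonneg hv0 hv0,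
    mul_le_mul_of_nonneg_left hR hv0]

lemma sInf_F1_image_eq_inter {δ ϑ B R : ℝ} (hδ : 0 < δ) (hϑ : 0 < ϑ)
    (hσ : (σ * σᵀ - δ • (1 : Matrix (Fin m) (Fin m) ℝ)).PosSemidef) (hP : ϑ ≤ P)
    (hw : vecNorm (P • μ + σ *ᵥ Λ) ≤ B) (hR : 2 * B / (ϑ * δ) ≤ R)
    {L : Set (Fin m → ℝ)} (hL : IsClosed L) (h0 : 0 ∈ L) :
    sInf (F1 σ μ Λ P '' L) = sInf (F1 σ μ Λ P '' (L ∩ {v | vecNorm v ≤ R})) := by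
  have hB : 0 ≤ B := (Real.sqrt_nonneg _).trans hw
  refine sInf_image_eq_sInf_image_inter (x₀ := 0) ⟨h0, ?_⟩ (by simp [F1])
    (fun v _ hv => F1_nonneg_of_le_vecNorm hδ hϑ hσ hP hw (hR.trans (not_le.1 hv).le)) ?_
  · show vecNorm 0 ≤ R
    simp only [vecNorm, dotProduct_zero, Real.sqrt_zero]
    exact (div_nonneg (by positivity) (by positivity)).trans hR
  · exact ((isCompact_setOf_vecNorm_le R).inter_left hL).bddBelow_image
      (by unfold F1; fun_prop)

end

theorem stmt19_general {m n : ℕ} (δ : ℝ) (hδ : 0 < δ)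
    (σ : Matrix (Fin m) (Fin n) ℝ)
    (hpsd : (σ * σᵀ - δ • (1 : Matrix (Fin m) (Fin m) ℝ)).PosSemidef)
    (μ : Fin m → ℝ)
    (K : Set (Fin m → ℝ)) (hcl : IsClosed K) (h0 : (0 : Fin m → ℝ) ∈ K)
    (ϑ M : ℝ) (hϑ : 0 < ϑ)
    (Pk : ℕ → ℝ) (hPk : ∀ k, Pk k ∈ Set.Icc ϑ M)
    (Λk : ℕ → Fin n → ℝ) (P : ℝ) (Λ : Fin n → ℝ)
    (hPlim : Tendsto Pk atTop (nhds P))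
    (hΛlim : Tendsto Λk atTop (nhds Λ)) :
    Tendsto (fun k : ℕ =>
        sInf (F1 σ μ (Λk k) (Pk k) '' (K ∩ {v | vecNorm v ≤ (k : ℝ)})))
      atTop (nhds (sInf (F1 σ μ Λ P '' K))) := by
  set B := vecNorm (P • μ + σ *ᵥ Λ) + 1
  set R := 2 * B / (ϑ * δ)
  have hdata : Tendsto (fun k => (Pk k, Λk k)) atTop (nhds (P, Λ)) := hPlim.prodMk_nhds hΛlim
  have hwB : ∀ᶠ k in atTop, vecNorm (Pk k • μ + σ *ᵥ Λk k) ≤ B := by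
    have hw : Continuous fun x : ℝ × (Fin n → ℝ) => vecNorm (x.1 • μ + σ *ᵥ x.2) :=
      continuous_vecNorm.comp (by fun_prop)
    exact (((hw.tendsto _).comp hdata).eventually_lt_const (lt_add_one _)).mono
      fun k hk => hk.le
  have hg : Continuous fun x : ℝ × (Fin n → ℝ) =>
      sInf (F1 σ μ x.2 x.1 '' (K ∩ {v | vecNorm v ≤ R})) :=
    ((isCompact_setOf_vecNorm_le R).inter_left hcl).continuous_sInf (continuous_F1 σ μ)
  have hlim : sInf (F1 σ μ Λ P '' K) = sInf (F1 σ μ Λ P '' (K ∩ {v | vecNorm v ≤ R})) :=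
    sInf_F1_image_eq_inter hδ hϑ hpsd (ge_of_tendsto' hPlim fun k => (hPk k).1)
      (lt_add_one _).le le_rfl hcl h0
  have htrunc : ∀ᶠ k : ℕ in atTop,
      sInf (F1 σ μ (Λk k) (Pk k) '' (K ∩ {v | vecNorm v ≤ R})) =
        sInf (F1 σ μ (Λk k) (Pk k) '' (K ∩ {v | vecNorm v ≤ (k : ℝ)})) := by
    filter_upwards [hwB, eventually_ge_atTop ⌈R⌉₊] with k hkB hkR
    have hRk : R ≤ k := (Nat.le_ceil R).trans (Nat.cast_le.2 hkR)
    have h0k : (0 : Fin m → ℝ) ∈ K ∩ {v | vecNorm v ≤ (k : ℝ)} :=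
      ⟨h0, by simp [vecNorm]⟩
    rw [sInf_F1_image_eq_inter hδ hϑ hpsd (hPk k).1 hkB (R := R) le_rfl
      (hcl.inter (isClosed_le continuous_vecNorm continuous_const)) h0k, inter_assoc,
      inter_eq_right.2 (ofPred_subset_ofPred.2 fun v hv => hv.trans hRk)]
  rw [hlim]
  exact ((hg.tendsto _).comp hdata).congr' htrunc

/-- if `σσᵀ ≥ δI`, `|σ| ≤ C`, `|μ| ≤ C`, `K` is a nonempty closed convex
cone, `(P^k) ⊆ [ϑ,M]` with `P^k → P` and `Λ^k → Λ`, then the truncated infima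
`F₁^{*,k}(P^k,Λ^k) := inf_{v∈K, |v|≤k} F₁(v,P^k,Λ^k)` converge to
`F₁*(P,Λ) := inf_{v∈K} F₁(v,P,Λ)`. -/
theorem stmt19 {m n : ℕ} (δ C : ℝ) (hδ : 0 < δ) (hC : 0 < C)
    (σ : Matrix (Fin m) (Fin n) ℝ)
    (hpsd : (σ * σᵀ - δ • (1 : Matrix (Fin m) (Fin m) ℝ)).PosSemidef)
    (hσC : Real.sqrt (∑ i, ∑ j, σ i j ^ 2) ≤ C)
    (μ : Fin m → ℝ) (hμC : vecNorm μ ≤ C)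
    (K : Set (Fin m → ℝ)) (hne : K.Nonempty) (hcl : IsClosed K) (hcv : Convex ℝ K)
    (hcone : ∀ v ∈ K, ∀ c : ℝ, 0 ≤ c → c • v ∈ K) (h0 : (0 : Fin m → ℝ) ∈ K)
    (ϑ M : ℝ) (hϑ : 0 < ϑ) (hϑM : ϑ ≤ M)
    (Pk : ℕ → ℝ) (hPk : ∀ k, Pk k ∈ Set.Icc ϑ M)
    (Λk : ℕ → Fin n → ℝ) (P : ℝ) (Λ : Fin n → ℝ)
    (hPlim : Tendsto Pk atTop (nhds P))
    (hΛlim : Tendsto Λk atTop (nhds Λ)) :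
    Tendsto (fun k : ℕ =>
        sInf (F1 σ μ (Λk k) (Pk k) '' (K ∩ {v | vecNorm v ≤ (k : ℝ)})))
      atTop (nhds (sInf (F1 σ μ Λ P '' K))) :=
  stmt19_general δ hδ σ hpsd μ K hcl h0 ϑ M hϑ Pk hPk Λk P Λ hPlim hΛlim
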